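/- arXiv:0908.0643 — 4 statements merged into one kernel-verified Lean document; each statement's English description precedes it below -/
import Mathlib

section
/- Let f : (0,∞) → [0,∞) be nonincreasing with f(t)t^{d-1} locally integrable, and let μ be the measure on ℝ^d with density f(‖y‖₂) with respect to Lebesgue measure. Then for every u ∈ (0,1) and every R > 0 with μ(B(0,uR)) > 0, one has μ(B(0,R))/μ(B(0,uR)) ≤ u^{-d}. -/
open MeasureTheory Metric
open scoped ENNReal

/-- For a radial measure with nonincreasing density, balls centered at the origin
grow at most like `u^{-d}`. -/
theorem radial_measure_growth (d : ℕ) (hd : 1 ≤ d) (f : ℝ → ℝ)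
    (hf_nonneg : ∀ x, 0 < x → 0 ≤ f x)
    (hf_mono : ∀ x y, 0 < x → x ≤ y → f y ≤ f x)
    (hf_meas : Measurable f)
    (hf_loc : ∀ R > (0 : ℝ), IntegrableOn (fun t => f t * t ^ (d - 1)) (Set.Ioc 0 R))
    (μ : Measure (EuclideanSpace ℝ (Fin d)))
    (hμ : μ = volume.withDensity (fun y => ENNReal.ofReal (f ‖y‖)))
    (u R : ℝ) (hu : u ∈ Set.Ioo (0 : ℝ) 1) (hR : 0 < R)
    (hpos : 0 < μ (closedBall 0 (u * R))) :
    μ (closedBall 0 R) ≤ ENNReal.ofReal (u ^ (-(d : ℝ))) * μ (closedBall 0 (u * R)) := by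
  obtain ⟨hu0, hu1⟩ := hu
  set E := EuclideanSpace ℝ (Fin d)
  have hfin : Module.finrank ℝ E = d := finrank_euclideanSpace_fin
  haveI : Nonempty (Fin d) := ⟨⟨0, hd⟩⟩
  haveI hnt : Nontrivial E := inferInstanceAs (Nontrivial (PiLp 2 fun _ : Fin d => ℝ))
  set g : E → ℝ≥0∞ := fun z => ENNReal.ofReal (f ‖z‖) with hg
  have hgm : Measurable g := (hf_meas.comp measurable_norm).ennreal_ofReal
  subst hμ
  rw [withDensity_apply _ measurableSet_closedBall,
    withDensity_apply _ measurableSet_closedBall]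
  have h0 : ∀ᵐ y ∂(volume.restrict (closedBall (0:E) R)), y ≠ 0 := by
    refine ae_restrict_of_ae ?_
    have : {y : E | ¬ y ≠ 0} = {0} := by ext y; simp
    rw [ae_iff, this]
    exact measure_singleton 0
  calc ∫⁻ y in closedBall (0:E) R, g y ∂volume
      ≤ ∫⁻ y in closedBall (0:E) R, ENNReal.ofReal (f (u * ‖y‖)) ∂volume := by
        refine lintegral_mono_ae ?_
        filter_upwards [h0] with y hy
        have hny : 0 < ‖y‖ := norm_pos_iff.2 hy
        exact ENNReal.ofReal_le_ofReal
          (hf_mono _ _ (by positivity) (by nlinarith [hny]))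
    _ = ∫⁻ y, (closedBall (0:E) (u * R)).indicator g (u • y) ∂volume := by
        rw [← lintegral_indicator measurableSet_closedBall]
        congr 1
        ext y
        have hnorm : ‖u • y‖ = u * ‖y‖ := by
          rw [norm_smul, Real.norm_eq_abs, abs_of_pos hu0]
        by_cases hy : y ∈ closedBall (0:E) R
        · have hmem : u • y ∈ closedBall (0:E) (u * R) := by
            simp only [mem_closedBall, dist_zero_right] at hy ⊢
            rw [hnorm]
            exact mul_le_mul_of_nonneg_left hy hu0.le
          rw [Set.indicator_of_mem hy, Set.indicator_of_mem hmem, hg]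
          simp [hnorm]
        · have hmem : u • y ∉ closedBall (0:E) (u * R) := by
            simp only [mem_closedBall, dist_zero_right] at hy ⊢
            rw [hnorm]
            intro h
            exact hy (le_of_mul_le_mul_left h hu0)
          rw [Set.indicator_of_notMem hy, Set.indicator_of_notMem hmem]
    _ = ∫⁻ z, (closedBall (0:E) (u * R)).indicator g z
          ∂(Measure.map (u • ·) volume) := by
        rw [lintegral_map (hgm.indicator measurableSet_closedBall)
          (measurable_const_smul u)]
    _ = ENNReal.ofReal (u ^ (-(d : ℝ))) * ∫⁻ z in closedBall (0:E) (u * R), g z ∂volume := by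
        rw [Measure.map_addHaar_smul volume (ne_of_gt hu0), hfin,
          lintegral_smul_measure, lintegral_indicator measurableSet_closedBall]
        congr 2
        rw [abs_of_nonneg (by positivity), Real.rpow_neg hu0.le, Real.rpow_natCast]
end

section
/- Let f : (0,∞) → [0,∞) be nonincreasing, bounded, positive on some interval (0,a), with f(t)t^{d-1} locally integrable, and let μ be the measure on ℝ^d with density f(‖y‖₂). Then for every u ∈ (0,1), lim_{R→0} μ(B(0,R))/μ(B(0,uR)) = u^{-d}. -/
open MeasureTheory Metric Filter
open scoped ENNReal Topology

/-- For a bounded, nonincreasing radial density positive near the origin,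
the ratio `μ(B(0,R))/μ(B(0,uR))` tends to `u^{-d}` as `R → 0`. -/
theorem radial_measure_ratio_limit_zero (d : ℕ) (hd : 1 ≤ d) (f : ℝ → ℝ)
    (hf_nonneg : ∀ x, 0 < x → 0 ≤ f x)
    (hf_mono : ∀ x y, 0 < x → x ≤ y → f y ≤ f x)
    (hf_meas : Measurable f)
    (hf_bdd : ∃ M : ℝ, ∀ x, 0 < x → f x ≤ M)
    (hf_pos : ∃ a > (0 : ℝ), ∀ x, 0 < x → x < a → 0 < f x)
    (hf_loc : ∀ R > (0 : ℝ), IntegrableOn (fun t => f t * t ^ (d - 1)) (Set.Ioc 0 R))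
    (μ : Measure (EuclideanSpace ℝ (Fin d)))
    (hμ : μ = volume.withDensity (fun y => ENNReal.ofReal (f ‖y‖)))
    (u : ℝ) (hu : u ∈ Set.Ioo (0 : ℝ) 1) :
    Tendsto (fun R : ℝ => (μ (closedBall 0 R)).toReal / (μ (closedBall 0 (u * R))).toReal)
      (𝓝[>] 0) (𝓝 (u ^ (-(d : ℝ)))) := by
  set E := EuclideanSpace ℝ (Fin d)
  haveI : Nonempty (Fin d) := ⟨⟨0, hd⟩⟩
  haveI : Nontrivial E :=
    Module.nontrivial_of_finrank_pos (R := ℝ)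
      (by rw [finrank_euclideanSpace_fin]; omega)
  obtain ⟨a, ha, hfa⟩ := hf_pos
  obtain ⟨M, hM⟩ := hf_bdd
  -- the limit of f at 0+
  set L : ℝ := sSup (f '' Set.Ioi 0) with hL
  have hbdd : BddAbove (f '' Set.Ioi 0) := ⟨M, by rintro _ ⟨x, hx, rfl⟩; exact hM x hx⟩
  have hfL : ∀ x, 0 < x → f x ≤ L := fun x hx => le_csSup hbdd ⟨x, hx, rfl⟩
  have hLpos : 0 < L := lt_of_lt_of_le (hfa (a / 2) (by linarith) (by linarith)) (hfL _ (by linarith))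
  have hL0 : 0 ≤ L := hLpos.le
  -- f tends to L at 0+
  have hftendsto : Tendsto f (𝓝[>] (0 : ℝ)) (𝓝 L) := by
    rw [Metric.tendsto_nhdsWithin_nhds]
    intro ε hε
    have hne : (f '' Set.Ioi 0).Nonempty := ⟨f a, a, ha, rfl⟩
    obtain ⟨_, ⟨x₀, hx₀, rfl⟩, hgt⟩ := exists_lt_of_lt_csSup hne (show L - ε < L by linarith)
    refine ⟨x₀, hx₀, fun x hx hdist => ?_⟩
    have hx0 : 0 < x := hx
    have hxle : x ≤ x₀ := by
      rw [Real.dist_eq, sub_zero, abs_of_pos hx0] at hdist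
      linarith
    have h1 : L - ε < f x := lt_of_lt_of_le hgt (hf_mono x x₀ hx0 hxle)
    have h2 : f x ≤ L := hfL x hx0
    rw [Real.dist_eq, abs_lt]
    constructor <;> linarith
  -- basic measure facts
  have hvol1 : (0 : ℝ≥0∞) < volume (closedBall (0 : E) 1) :=
    measure_closedBall_pos volume 0 one_pos
  have hvol1top : volume (closedBall (0 : E) 1) ≠ ∞ := measure_closedBall_lt_top.ne
  set C : ℝ := (volume (closedBall (0 : E) 1)).toReal with hC
  have hCpos : 0 < C := ENNReal.toReal_pos hvol1.ne' hvol1top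
  have hrank : Module.finrank ℝ E = d := finrank_euclideanSpace_fin
  have hvolR : ∀ R : ℝ, 0 ≤ R →
      (volume (closedBall (0 : E) R)).toReal = C * R ^ d := by
    intro R hR
    rw [Measure.addHaar_closedBall' volume (0 : E) hR, hrank, ENNReal.toReal_mul,
      ENNReal.toReal_ofReal (pow_nonneg hR d), mul_comm]
  -- the singleton {0} is null
  have h0 : (volume : Measure E) {0} = 0 := measure_singleton 0
  have hne0 : ∀ᵐ y : E, y ≠ 0 := by
    rw [ae_iff]
    simpa using h0
  -- bounds on μ of balls
  have hμball : ∀ R : ℝ, μ (closedBall (0 : E) R) =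
      ∫⁻ y in closedBall (0 : E) R, ENNReal.ofReal (f ‖y‖) := by
    intro R
    rw [hμ, withDensity_apply _ measurableSet_closedBall]
  have hub : ∀ R : ℝ, μ (closedBall (0 : E) R) ≤
      ENNReal.ofReal L * volume (closedBall (0 : E) R) := by
    intro R
    rw [hμball R, ← setLIntegral_const]
    refine setLIntegral_mono_ae measurable_const.aemeasurable ?_
    filter_upwards [hne0] with y hy _
    exact ENNReal.ofReal_le_ofReal (hfL _ (norm_pos_iff.2 hy))
  have hμtop : ∀ R : ℝ, μ (closedBall (0 : E) R) ≠ ∞ := by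
    intro R
    refine ((hub R).trans_lt ?_).ne
    exact ENNReal.mul_lt_top ENNReal.ofReal_lt_top measure_closedBall_lt_top
  have hlb : ∀ R : ℝ, 0 < R → ENNReal.ofReal (f R) * volume (closedBall (0 : E) R) ≤
      μ (closedBall (0 : E) R) := by
    intro R hR
    rw [hμball R, ← setLIntegral_const]
    refine setLIntegral_mono_ae
      ((ENNReal.measurable_ofReal.comp (hf_meas.comp measurable_norm)).aemeasurable) ?_
    filter_upwards [hne0] with y hy hyB
    refine ENNReal.ofReal_le_ofReal ?_
    exact hf_mono _ _ (norm_pos_iff.2 hy) (mem_closedBall_zero_iff.1 hyB)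
  -- real versions
  set g : ℝ → ℝ := fun R => (μ (closedBall (0 : E) R)).toReal with hg
  have hub' : ∀ R : ℝ, 0 ≤ R → g R ≤ L * (C * R ^ d) := by
    intro R hR
    have := ENNReal.toReal_mono (ENNReal.mul_lt_top ENNReal.ofReal_lt_top measure_closedBall_lt_top).ne (hub R)
    rwa [ENNReal.toReal_mul, ENNReal.toReal_ofReal hL0, hvolR R hR] at this
  have hlb' : ∀ R : ℝ, 0 < R → f R * (C * R ^ d) ≤ g R := by
    intro R hR
    have := ENNReal.toReal_mono (hμtop R) (hlb R hR)
    rwa [ENNReal.toReal_mul, ENNReal.toReal_ofReal (hf_nonneg R hR), hvolR R hR.le] at this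
  -- the normalized function φ
  set φ : ℝ → ℝ := fun R => g R / (C * R ^ d) with hφ
  have hφ_ub : ∀ R : ℝ, 0 < R → φ R ≤ L := by
    intro R hR
    rw [hφ]
    have hpos : 0 < C * R ^ d := mul_pos hCpos (pow_pos hR d)
    exact (div_le_iff₀ hpos).2 (hub' R hR.le)
  have hφ_lb : ∀ R : ℝ, 0 < R → f R ≤ φ R := by
    intro R hR
    have hpos : 0 < C * R ^ d := mul_pos hCpos (pow_pos hR d)
    exact (le_div_iff₀ hpos).2 (hlb' R hR)
  have hφtendsto : Tendsto φ (𝓝[>] (0 : ℝ)) (𝓝 L) := by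
    refine tendsto_of_tendsto_of_tendsto_of_le_of_le' hftendsto tendsto_const_nhds ?_ ?_
    · filter_upwards [self_mem_nhdsWithin] with R hR using hφ_lb R hR
    · filter_upwards [self_mem_nhdsWithin] with R hR using hφ_ub R hR
  -- composition with R ↦ u * R
  have hmul : Tendsto (fun R : ℝ => u * R) (𝓝[>] (0 : ℝ)) (𝓝[>] (0 : ℝ)) := by
    rw [tendsto_nhdsWithin_iff]
    constructor
    · have : Tendsto (fun R : ℝ => u * R) (𝓝 (0 : ℝ)) (𝓝 (u * 0)) :=
        (continuous_const.mul continuous_id).tendsto 0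
      rw [mul_zero] at this
      exact this.mono_left nhdsWithin_le_nhds
    · filter_upwards [self_mem_nhdsWithin] with R hR
      exact mul_pos hu.1 hR
  have hφu : Tendsto (fun R : ℝ => φ (u * R)) (𝓝[>] (0 : ℝ)) (𝓝 L) := hφtendsto.comp hmul
  -- the ratio
  have hratio : Tendsto (fun R : ℝ => φ R / φ (u * R) * (u ^ d)⁻¹) (𝓝[>] (0 : ℝ))
      (𝓝 ((u : ℝ) ^ (-(d : ℝ)))) := by
    have h1 : Tendsto (fun R : ℝ => φ R / φ (u * R)) (𝓝[>] (0 : ℝ)) (𝓝 (L / L)) :=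
      hφtendsto.div hφu hLpos.ne'
    rw [div_self hLpos.ne'] at h1
    have := h1.mul_const ((u ^ d)⁻¹)
    rw [one_mul] at this
    convert this using 2
    rw [Real.rpow_neg hu.1.le, Real.rpow_natCast]
  refine hratio.congr' ?_
  filter_upwards [self_mem_nhdsWithin] with R hR
  have hR : (0 : ℝ) < R := hR
  have hu0 : (0 : ℝ) < u := hu.1
  have hCR : C * R ^ d ≠ 0 := (mul_pos hCpos (pow_pos hR d)).ne'
  have hCuR : C * (u * R) ^ d ≠ 0 := (mul_pos hCpos (pow_pos (mul_pos hu0 hR) d)).ne'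
  show φ R / φ (u * R) * (u ^ d)⁻¹ = g R / g (u * R)
  by_cases hz : g (u * R) = 0
  · simp [hφ, hz]
  · have hu0' : u ≠ 0 := hu0.ne'
    have hR0 : R ≠ 0 := hR.ne'
    have hC0 : C ≠ 0 := hCpos.ne'
    rw [hφ]
    simp only
    field_simp
    ring
end

section
/- Let μ be a rotationally invariant locally finite Borel measure on ℝ^d, 1 ≤ p < ∞, q = p/(p-1). Fix R > 0 and v ∈ (0,1), set H = R√(1+v²), and assume μ(B(0,vR)) > 0. Then the best weak type (p,p) constant c_{p,d,μ} of the centered maximal operator M_μ satisfies c_{p,d,μ} ≥ μ(B(0,vR))^{1/q} μ(B(0,R))^{1/p} / (2 μ(B(Re_1, H))). -/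
/-!
Test the weak type inequality on `g = 1_{B(0,r)}` with `r = vR`. For `‖x‖ ≤ R` use the ball about
`x` of radius `√(‖x‖² + r²)`: it contains the half of `B(0,r)` on the side of `x`, which carries at
least half of `μ(B(0,r))` by the symmetry `y ↦ -y`, while its part outside `B(0,r)` lies in the
ball of radius `H = √(R² + r²)` about a point of the sphere of radius `R`. By rotation invariance the
mass of that ball outside `B(0,r)` is the same for every point of the sphere, and `B(Re₁, H)`
contains it together with a half of `B(0,r)`. Hence `M_μ g ≥ μ(B(0,r)) / (2 μ(B(Re₁, H)))` on all
of `B(0,R)`, and the weak type inequality at this level is the claimed bound.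
-/

open MeasureTheory Metric
open scoped ENNReal RealInnerProductSpace

/-- Centered Hardy–Littlewood maximal function (ℝ≥0∞-valued). -/
noncomputable def maxFn {d : ℕ} (μ : Measure (EuclideanSpace ℝ (Fin d)))
    (g : EuclideanSpace ℝ (Fin d) → ℝ) (x : EuclideanSpace ℝ (Fin d)) : ℝ≥0∞ :=
  ⨆ r : {r : ℝ // 0 < r ∧ 0 < μ (closedBall x r)},
    (∫⁻ y in closedBall x r.1, ENNReal.ofReal |g y| ∂μ) / μ (closedBall x r.1)

/-- `c` is an admissible constant in the weak type `(p,p)` inequality for `M_μ`. -/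
def WeakType {d : ℕ} (μ : Measure (EuclideanSpace ℝ (Fin d))) (p c : ℝ) : Prop :=
  ∀ g : EuclideanSpace ℝ (Fin d) → ℝ, MemLp g (ENNReal.ofReal p) μ →
    ∀ α : ℝ, 0 < α →
      μ {x | ENNReal.ofReal α ≤ maxFn μ g x} ≤
        ENNReal.ofReal ((c * (eLpNorm g (ENNReal.ofReal p) μ).toReal / α) ^ p)

-- At `p = 1` both sides are `0`, since Lean's `1 / 0` is `0`.
theorem one_div_div_sub_one {p : ℝ} (hp : 1 ≤ p) : 1 / (p / (p - 1)) = 1 - 1 / p := by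
  rcases hp.eq_or_lt with rfl | hp1
  · simp
  · rw [one_div_div, sub_div, div_self (by linarith)]

theorem ENNReal.div_two_mul_le_div_of_le_add {a n o d x : ℝ≥0∞} (ha : a ≤ 2 * n)
    (hd : d ≤ n + o) (hx : a + 2 * o ≤ 2 * x) (hd0 : d ≠ 0) (hd_top : d ≠ ∞) :
    a / (2 * x) ≤ n / d := by
  have key : a * d ≤ n * (2 * x) :=
    calc a * d ≤ a * n + a * o := by rw [← mul_add]; gcongr
      _ ≤ a * n + 2 * n * o := by gcongr
      _ = n * (a + 2 * o) := by ring
      _ ≤ n * (2 * x) := by gcongr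
  rw [ENNReal.le_div_iff_mul_le (Or.inl hd0) (Or.inl hd_top), ← ENNReal.mul_div_right_comm]
  exact ENNReal.div_le_of_le_mul key

section Geometry

variable {E : Type*} [NormedAddCommGroup E] [InnerProductSpace ℝ E]

theorem mem_closedBall_sqrt_iff {x y : E} {r : ℝ} :
    y ∈ closedBall x √(‖x‖ ^ 2 + r ^ 2) ↔ ‖y‖ ^ 2 - r ^ 2 ≤ 2 * ⟪y, x⟫ := by
  rw [mem_closedBall, dist_eq_norm, Real.le_sqrt (norm_nonneg _) (by positivity),
    norm_sub_sq_real]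
  constructor <;> intro h <;> linarith

theorem closedBall_zero_inter_inner_nonneg_subset (x : E) {r : ℝ} :
    closedBall 0 r ∩ {y | 0 ≤ ⟪y, x⟫} ⊆ closedBall x √(‖x‖ ^ 2 + r ^ 2) := by
  rintro y ⟨hy, hxy : 0 ≤ ⟪y, x⟫⟩
  rw [mem_closedBall_zero_iff] at hy
  rw [mem_closedBall_sqrt_iff]
  nlinarith [norm_nonneg y]

theorem closedBall_smul_diff_closedBall_zero_subset (w : E) {s r : ℝ} (hs₀ : 0 ≤ s)
    (hs₁ : s ≤ 1) (hr : 0 ≤ r) :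
    closedBall (s • w) √(‖s • w‖ ^ 2 + r ^ 2) \ closedBall 0 r ⊆
      closedBall w √(‖w‖ ^ 2 + r ^ 2) := by
  rintro y ⟨hy, hyr⟩
  rw [mem_closedBall_sqrt_iff, real_inner_smul_right] at hy
  rw [mem_closedBall_zero_iff, not_le] at hyr
  rw [mem_closedBall_sqrt_iff]
  have hpos : 0 < s * ⟪y, w⟫ := by nlinarith
  have hinner : 0 < ⟪y, w⟫ := pos_of_mul_pos_right hpos hs₀
  nlinarith

theorem exists_smul_eq_of_norm_le {R : ℝ} (hR : 0 < R) {x z : E} (hx : ‖x‖ ≤ R)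
    (hz : ‖z‖ = R) : ∃ s ∈ Set.Icc (0 : ℝ) 1, ∃ w : E, ‖w‖ = R ∧ s • w = x := by
  rcases eq_or_ne x 0 with rfl | hx0
  · exact ⟨0, ⟨le_rfl, zero_le_one⟩, z, hz, zero_smul ℝ z⟩
  have hxpos : 0 < ‖x‖ := norm_pos_iff.mpr hx0
  refine ⟨‖x‖ / R, ⟨by positivity, (div_le_one hR).mpr hx⟩, (R / ‖x‖) • x, ?_, ?_⟩
  · rw [norm_smul, Real.norm_of_nonneg (by positivity), div_mul_cancel₀ _ hxpos.ne']
  · rw [smul_smul, div_mul_div_cancel₀ hR.ne', div_self hxpos.ne', one_smul]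

end Geometry

section RotationInvariant

variable {E : Type*} [NormedAddCommGroup E] [InnerProductSpace ℝ E] [MeasurableSpace E]
  [BorelSpace E] {μ : Measure E}

theorem measure_closedBall_zero_le_two_mul_inter_inner_nonneg
    (hrot : ∀ T : E ≃ₗᵢ[ℝ] E, Measure.map T μ = μ) (x : E) (r : ℝ) :
    μ (closedBall 0 r) ≤ 2 * μ (closedBall 0 r ∩ {y | 0 ≤ ⟪y, x⟫}) := by
  set A := closedBall (0 : E) r ∩ {y | 0 ≤ ⟪y, x⟫}
  have hneg : μ (closedBall 0 r ∩ {y | ⟪y, x⟫ ≤ 0}) = μ A := by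
    have hT : MeasurePreserving (LinearIsometryEquiv.neg ℝ (E := E)) μ μ :=
      ⟨(LinearIsometryEquiv.neg ℝ).continuous.measurable, hrot _⟩
    have hA : MeasurableSet A := measurableSet_closedBall.inter
      (isClosed_le continuous_const (continuous_id.inner continuous_const)).measurableSet
    rw [← hT.measure_preimage hA.nullMeasurableSet]
    congr 1
    ext y
    simp [A, inner_neg_left]
  calc μ (closedBall 0 r) ≤ μ (A ∪ closedBall 0 r ∩ {y | ⟪y, x⟫ ≤ 0}) :=
        measure_mono fun y hy => (le_total 0 ⟪y, x⟫).imp (⟨hy, ·⟩) (⟨hy, ·⟩)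
    _ ≤ μ A + μ (closedBall 0 r ∩ {y | ⟪y, x⟫ ≤ 0}) := measure_union_le _ _
    _ = 2 * μ A := by rw [hneg, two_mul]

theorem measure_closedBall_diff_closedBall_zero_eq_of_norm_eq
    (hrot : ∀ T : E ≃ₗᵢ[ℝ] E, Measure.map T μ = μ) {x z : E} (h : ‖x‖ = ‖z‖) (ρ r : ℝ) :
    μ (closedBall x ρ \ closedBall 0 r) = μ (closedBall z ρ \ closedBall 0 r) := by
  set T := Submodule.reflection (ℝ ∙ (x - z))ᗮ
  have hT : MeasurePreserving T μ μ := ⟨T.continuous.measurable, hrot _⟩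
  rw [← hT.measure_preimage
    (measurableSet_closedBall.diff measurableSet_closedBall).nullMeasurableSet]
  congr 1
  rw [Set.preimage_sdiff, LinearIsometryEquiv.preimage_closedBall,
    LinearIsometryEquiv.preimage_closedBall, map_zero]
  simp [T, Submodule.reflection_sub h]

theorem measure_closedBall_zero_add_two_mul_diff_le
    (hrot : ∀ T : E ≃ₗᵢ[ℝ] E, Measure.map T μ = μ) (z : E) (r : ℝ) :
    μ (closedBall 0 r) + 2 * μ (closedBall z √(‖z‖ ^ 2 + r ^ 2) \ closedBall 0 r) ≤
      2 * μ (closedBall z √(‖z‖ ^ 2 + r ^ 2)) := by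
  set A := closedBall (0 : E) r ∩ {y | 0 ≤ ⟪y, z⟫}
  have hdisj : μ A + μ (closedBall z √(‖z‖ ^ 2 + r ^ 2) \ closedBall 0 r) ≤
      μ (closedBall z √(‖z‖ ^ 2 + r ^ 2)) := by
    rw [← measure_union (Set.disjoint_sdiff_right.mono_left Set.inter_subset_left)
      (measurableSet_closedBall.diff measurableSet_closedBall)]
    exact measure_mono (Set.union_subset (closedBall_zero_inter_inner_nonneg_subset z)
      Set.sdiff_subset)
  calc μ (closedBall 0 r) + 2 * μ (closedBall z √(‖z‖ ^ 2 + r ^ 2) \ closedBall 0 r)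
      ≤ 2 * μ A + 2 * μ (closedBall z √(‖z‖ ^ 2 + r ^ 2) \ closedBall 0 r) := by
        gcongr
        exact measure_closedBall_zero_le_two_mul_inter_inner_nonneg hrot z r
    _ ≤ 2 * μ (closedBall z √(‖z‖ ^ 2 + r ^ 2)) := by
        rw [← mul_add]
        gcongr

theorem exists_closedBall_measure_inter_div_ge [ProperSpace E] [IsFiniteMeasureOnCompacts μ]
    (hrot : ∀ T : E ≃ₗᵢ[ℝ] E, Measure.map T μ = μ) {R r : ℝ} (hR : 0 < R) (hr : 0 < r)
    {x z : E} (hx : ‖x‖ ≤ R) (hz : ‖z‖ = R) (hB : μ (closedBall 0 r) ≠ 0) :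
    ∃ ρ > 0, 0 < μ (closedBall x ρ) ∧
      μ (closedBall 0 r) / (2 * μ (closedBall z √(R ^ 2 + r ^ 2))) ≤
        μ (closedBall 0 r ∩ closedBall x ρ) / μ (closedBall x ρ) := by
  obtain ⟨s, ⟨hs₀, hs₁⟩, w, hw, rfl⟩ := exists_smul_eq_of_norm_le hR hx hz
  set ρ := √(‖s • w‖ ^ 2 + r ^ 2)
  set N := μ (closedBall 0 r ∩ closedBall (s • w) ρ)
  have hBN : μ (closedBall 0 r) ≤ 2 * N :=
    (measure_closedBall_zero_le_two_mul_inter_inner_nonneg hrot (s • w) r).trans <| by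
      gcongr 2 * ?_
      exact measure_mono fun y hy => ⟨hy.1, closedBall_zero_inter_inner_nonneg_subset (s • w) hy⟩
  have hN : N ≠ 0 := fun h => hB (by simpa [h] using hBN)
  have hD : μ (closedBall (s • w) ρ) ≠ 0 :=
    fun h => hN (measure_mono_null Set.inter_subset_right h)
  have hDN : μ (closedBall (s • w) ρ) ≤
      N + μ (closedBall z √(‖z‖ ^ 2 + r ^ 2) \ closedBall 0 r) := by
    rw [← measure_closedBall_diff_closedBall_zero_eq_of_norm_eq hrot (hw.trans hz.symm),
      hz, ← hw]
    have hsplit := measure_le_inter_add_sdiff μ (closedBall (s • w) ρ) (closedBall 0 r)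
    rw [Set.inter_comm] at hsplit
    refine hsplit.trans (add_le_add le_rfl (measure_mono fun y hy => ⟨?_, hy.2⟩))
    exact closedBall_smul_diff_closedBall_zero_subset w hs₀ hs₁ hr.le hy
  refine ⟨ρ, Real.sqrt_pos.mpr (by positivity), pos_iff_ne_zero.mpr hD, ?_⟩
  rw [← hz]
  exact ENNReal.div_two_mul_le_div_of_le_add hBN hDN
    (measure_closedBall_zero_add_two_mul_diff_le hrot z r) hD measure_closedBall_lt_top.ne

end RotationInvariant

theorem measure_inter_div_le_maxFn_indicator {d : ℕ} (μ : Measure (EuclideanSpace ℝ (Fin d)))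
    {S : Set (EuclideanSpace ℝ (Fin d))} (hS : MeasurableSet S) (x : EuclideanSpace ℝ (Fin d))
    {ρ : ℝ} (hρ : 0 < ρ) (hD : 0 < μ (closedBall x ρ)) :
    μ (S ∩ closedBall x ρ) / μ (closedBall x ρ) ≤ maxFn μ (S.indicator 1) x := by
  refine le_iSup_of_le (⟨ρ, hρ, hD⟩ : {r : ℝ // 0 < r ∧ 0 < μ (closedBall x r)}) (le_of_eq ?_)
  have hind : (fun y => ENNReal.ofReal |S.indicator (1 : EuclideanSpace ℝ (Fin d) → ℝ) y|) =
      S.indicator 1 := by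
    ext y
    by_cases hy : y ∈ S <;> simp [hy]
  rw [hind, setLIntegral_indicator hS, Pi.one_def, setLIntegral_const, one_mul]

theorem div_two_mul_le_maxFn_indicator {d : ℕ} {μ : Measure (EuclideanSpace ℝ (Fin d))}
    [IsLocallyFiniteMeasure μ]
    (hrot : ∀ T : EuclideanSpace ℝ (Fin d) ≃ₗᵢ[ℝ] EuclideanSpace ℝ (Fin d), Measure.map T μ = μ)
    {R r : ℝ} (hR : 0 < R) (hr : 0 < r) {x z : EuclideanSpace ℝ (Fin d)} (hx : ‖x‖ ≤ R)
    (hz : ‖z‖ = R) (hB : μ (closedBall 0 r) ≠ 0) :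
    μ (closedBall 0 r) / (2 * μ (closedBall z √(R ^ 2 + r ^ 2))) ≤
      maxFn μ ((closedBall 0 r).indicator 1) x := by
  obtain ⟨ρ, hρ, hD, hdens⟩ := exists_closedBall_measure_inter_div_ge hrot hR hr hx hz hB
  exact hdens.trans (measure_inter_div_le_maxFn_indicator μ measurableSet_closedBall x hρ hD)

theorem WeakType.toReal_mul_toReal_rpow_le {d : ℕ} {μ : Measure (EuclideanSpace ℝ (Fin d))}
    {p c : ℝ} (h : WeakType μ p c) (hp : 0 < p) (hc : 0 ≤ c)
    {S A : Set (EuclideanSpace ℝ (Fin d))} (hS : MeasurableSet S) (hS_top : μ S ≠ ∞)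
    {α : ℝ≥0∞} (hα₀ : α ≠ 0) (hα_top : α ≠ ∞) (hA : ∀ x ∈ A, α ≤ maxFn μ (S.indicator 1) x) :
    α.toReal * (μ A).toReal ^ (1 / p) ≤ c * (μ S).toReal ^ (1 / p) := by
  have hα : 0 < α.toReal := ENNReal.toReal_pos hα₀ hα_top
  have hnorm : (eLpNorm (S.indicator (1 : EuclideanSpace ℝ (Fin d) → ℝ)) (ENNReal.ofReal p)
      μ).toReal = (μ S).toReal ^ (1 / p) := by
    rw [Pi.one_def, eLpNorm_indicator_const hS (by simpa using hp) ENNReal.ofReal_ne_top,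
      ENNReal.toReal_ofReal hp.le, enorm_one, one_mul, ENNReal.toReal_rpow]
  have hK : 0 ≤ c * (μ S).toReal ^ (1 / p) / α.toReal := by positivity
  have hle : (μ A).toReal ≤ (c * (μ S).toReal ^ (1 / p) / α.toReal) ^ p := by
    have hA' : A ⊆ {x | ENNReal.ofReal α.toReal ≤ maxFn μ (S.indicator 1) x} :=
      fun x hx => (ENNReal.ofReal_toReal hα_top).trans_le (hA x hx)
    refine ENNReal.toReal_le_of_le_ofReal (by positivity) ((measure_mono hA').trans ?_)
    rw [← hnorm]
    exact h _ (memLp_indicator_const _ hS _ (Or.inr hS_top)) _ hα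
  have hroot := Real.rpow_le_rpow ENNReal.toReal_nonneg hle (by positivity : 0 ≤ 1 / p)
  rw [← Real.rpow_mul hK, mul_one_div_cancel hp.ne', Real.rpow_one, le_div_iff₀ hα] at hroot
  linarith

/-- Lower bound for the best weak type `(p,p)` constant of a rotationally
invariant measure: any admissible constant `c` satisfies
`c ≥ μ(B(0,vR))^{1/q} μ(B(0,R))^{1/p} / (2 μ(B(Re₁, H)))`. -/
theorem weak_const_lower_bound {d : ℕ} (hd : 1 ≤ d)
    (μ : Measure (EuclideanSpace ℝ (Fin d))) [IsLocallyFiniteMeasure μ]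
    (hrot : ∀ T : EuclideanSpace ℝ (Fin d) ≃ₗᵢ[ℝ] EuclideanSpace ℝ (Fin d),
      Measure.map T μ = μ)
    (p : ℝ) (hp : 1 ≤ p) (q : ℝ) (hq : q = p / (p - 1))
    (R v : ℝ) (hR : 0 < R) (hv : v ∈ Set.Ioo (0 : ℝ) 1)
    (H : ℝ) (hH : H = R * Real.sqrt (1 + v ^ 2))
    (hpos : 0 < μ (closedBall 0 (v * R)))
    (c : ℝ) (hc : 0 ≤ c) (hweak : WeakType μ p c) :
    (μ (closedBall 0 (v * R))).toReal ^ (1 / q) * (μ (closedBall 0 R)).toReal ^ (1 / p) /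
        (2 * (μ (closedBall (R • EuclideanSpace.single (⟨0, by omega⟩ : Fin d) (1 : ℝ)) H)).toReal)
      ≤ c := by
  set e := R • EuclideanSpace.single (⟨0, by omega⟩ : Fin d) (1 : ℝ)
  set r := v * R
  have he : ‖e‖ = R := by simp [e, norm_smul, hR.le]
  have hH' : √(R ^ 2 + r ^ 2) = H := by
    rw [hH, show R ^ 2 + r ^ 2 = R ^ 2 * (1 + v ^ 2) by ring, Real.sqrt_mul (sq_nonneg R),
      Real.sqrt_sq hR.le]
  have hBX : μ (closedBall 0 r) ≤ 2 * μ (closedBall e H) := by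
    have h := measure_closedBall_zero_add_two_mul_diff_le hrot e r
    rw [he, hH'] at h
    exact le_self_add.trans h
  have hX₀ : μ (closedBall e H) ≠ 0 := fun h => hpos.ne' (by simpa [h] using hBX)
  have hbound := hweak.toReal_mul_toReal_rpow_le (by linarith) hc measurableSet_closedBall
    measure_closedBall_lt_top.ne (ENNReal.div_pos hpos.ne'
      (ENNReal.mul_ne_top ENNReal.ofNat_ne_top measure_closedBall_lt_top.ne)).ne'
    (ENNReal.div_ne_top measure_closedBall_lt_top.ne (by simpa using hX₀))
    fun x hx => hH' ▸ div_two_mul_le_maxFn_indicator hrot hR (mul_pos hv.1 hR)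
      (mem_closedBall_zero_iff.mp hx) he hpos.ne'
  have hB : 0 < (μ (closedBall 0 r)).toReal :=
    ENNReal.toReal_pos hpos.ne' measure_closedBall_lt_top.ne
  rw [ENNReal.toReal_div, ENNReal.toReal_mul, ENNReal.toReal_ofNat] at hbound
  set B := (μ (closedBall 0 r)).toReal
  set X := (μ (closedBall e H)).toReal
  calc B ^ (1 / q) * (μ (closedBall 0 R)).toReal ^ (1 / p) / (2 * X)
      = B / (2 * X) * (μ (closedBall 0 R)).toReal ^ (1 / p) / B ^ (1 / p) := by
        rw [hq, one_div_div_sub_one hp, Real.rpow_sub hB, Real.rpow_one]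
        ring
    _ ≤ c := (div_le_iff₀ (Real.rpow_pos_of_pos hB _)).mpr hbound
end

section
/- In ℝ^d (d ≥ 2), the set B(0,1)^c ∩ B(e_1, √5/2) ∩ {x : x_1 ≤ 1} is contained in the cone subtended from the origin by the spherical cap C(3/8, e_1) ⊂ S^{d-1}, i.e., every nonzero point x in this set satisfies ⟨x/‖x‖₂, e_1⟩ ≥ 3/8. -/
/-!
Write `r = ‖x‖ ≥ 1`. Expanding `‖x - e‖² ≤ 5/4` for a unit vector `e` gives
`2⟪x, e⟫ ≥ r² - 1/4`, and `r² - 1/4 ≥ 3r/4` because `(4r + 1)(r - 1) ≥ 0`.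
-/

open Metric

section InnerProductSpace

variable {E : Type*} [NormedAddCommGroup E] [InnerProductSpace ℝ E]

lemma two_mul_inner_ge_of_norm_sub_le {x e : E} (he : ‖e‖ = 1)
    (hxe : ‖x - e‖ ≤ √5 / 2) : ‖x‖ ^ 2 - 1 / 4 ≤ 2 * inner ℝ x e := by
  have hsq : ‖x - e‖ ^ 2 ≤ 5 / 4 := by
    calc ‖x - e‖ ^ 2 ≤ (√5 / 2) ^ 2 := pow_le_pow_left₀ (norm_nonneg _) hxe 2
      _ = 5 / 4 := by rw [div_pow, Real.sq_sqrt (by norm_num)]; norm_num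
  rw [norm_sub_sq_real, he] at hsq
  linarith

lemma three_eighths_mul_norm_le_inner {x e : E} (he : ‖e‖ = 1) (hx : 1 ≤ ‖x‖)
    (hxe : ‖x - e‖ ≤ √5 / 2) : 3 / 8 * ‖x‖ ≤ inner ℝ x e := by
  have := two_mul_inner_ge_of_norm_sub_le he hxe
  nlinarith

lemma three_eighths_le_inner_normalize {x e : E} (he : ‖e‖ = 1) (hx : 1 ≤ ‖x‖)
    (hxe : ‖x - e‖ ≤ √5 / 2) : 3 / 8 ≤ inner ℝ (‖x‖⁻¹ • x) e := by
  have hpos : 0 < ‖x‖ := one_pos.trans_le hx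
  rw [real_inner_smul_left, inv_mul_eq_div, le_div_iff₀ hpos]
  exact three_eighths_mul_norm_le_inner he hx hxe

end InnerProductSpace

/-- The set `B(0,1)ᶜ ∩ B(e₁, √5/2) ∩ {x₁ ≤ 1}` is contained in the cone over the
spherical cap `C(3/8, e₁)`. -/
theorem outer_piece_in_cone (d : ℕ) (hd : 2 ≤ d)
    (x : EuclideanSpace ℝ (Fin d))
    (h1 : x ∉ closedBall (0 : EuclideanSpace ℝ (Fin d)) 1)
    (h2 : x ∈ closedBall (EuclideanSpace.single (⟨0, by omega⟩ : Fin d) (1 : ℝ))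
      (Real.sqrt 5 / 2)) :
    (3 / 8 : ℝ) ≤
      inner ℝ (‖x‖⁻¹ • x) (EuclideanSpace.single (⟨0, by omega⟩ : Fin d) (1 : ℝ)) := by
  rw [mem_closedBall, dist_zero_right, not_le] at h1
  rw [mem_closedBall, dist_eq_norm] at h2
  exact three_eighths_le_inner_normalize (by simp) h1.le h2
end
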